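/- arXiv:2312.14298 — 2 statements merged into one kernel-verified Lean document; each statement's English description precedes it below -/
import Mathlib

section
/- Let T be a generalized star (a tree with exactly one vertex c of degree at least 3) with ℓ legs, and let S be a minimal zero forcing set of T. Then exactly ℓ − 1 of the legs of T contain a vertex of S. -/
namespace ZF

variable {V : Type*}

/-- The set of vertices forced blue starting from `S`, under the standard color change
rule: a blue vertex with exactly one white neighbor forces that neighbor blue. -/
inductive Forced (G : SimpleGraph V) (S : Set V) : V → Prop
  | init {v : V} : v ∈ S → Forced G S v
  | force {u w : V} : Forced G S u → G.Adj u w →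
      (∀ x, G.Adj u x → x ≠ w → Forced G S x) → Forced G S w

/-- `S` is a zero forcing set of `G`. -/
def IsZFS (G : SimpleGraph V) (S : Set V) : Prop := ∀ v, Forced G S v

/-- `S` is a minimal zero forcing set of `G`. -/
def IsMinimalZFS (G : SimpleGraph V) (S : Set V) : Prop :=
  IsZFS G S ∧ ∀ S' ⊂ S, ¬ IsZFS G S'

/-- The zero forcing number of `G`. -/
noncomputable def zfNum (G : SimpleGraph V) : ℕ :=
  sInf {n | ∃ S : Set V, IsZFS G S ∧ S.ncard = n}

/-- A graph is well-forced if every minimal zero forcing set is minimum. -/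
def WellForced (G : SimpleGraph V) : Prop :=
  ∀ S, IsMinimalZFS G S → S.ncard = zfNum G

/-- Degree of a vertex (as the `ncard` of its neighbor set). -/
noncomputable def deg (G : SimpleGraph V) (v : V) : ℕ := (G.neighborSet v).ncard

end ZF

open ZF SimpleGraph

/-- A structure witnessing that `G` is a generalized star with center `c` and `ℓ` legs:
the vertex set consists of `c` together with `ℓ` disjoint legs, the `i`-th leg being a
path `leg i 0, leg i 1, …, leg i (len i - 1)` attached to `c` at `leg i 0`, and these
are the only adjacencies in `G`.  The length of the `i`-th leg (its number of edges,
counted from `c` to the leaf) is `len i`. -/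
structure GenStar {V : Type*} (G : SimpleGraph V) (c : V) (ℓ : ℕ) where
  len : Fin ℓ → ℕ
  len_pos : ∀ i, 1 ≤ len i
  leg : Fin ℓ → ℕ → V
  ne_center : ∀ i j, j < len i → leg i j ≠ c
  inj : ∀ i j i' j', j < len i → j' < len i' → leg i j = leg i' j' → i = i' ∧ j = j'
  cover : ∀ v, v = c ∨ ∃ i j, j < len i ∧ leg i j = v
  adj_iff : ∀ a b, G.Adj a b ↔
    ((a = c ∧ ∃ i, b = leg i 0) ∨ (b = c ∧ ∃ i, a = leg i 0) ∨
      (∃ i j, j + 1 < len i ∧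
        ((a = leg i j ∧ b = leg i (j + 1)) ∨ (b = leg i j ∧ a = leg i (j + 1)))))

section Aux

variable {V : Type*}

lemma forced_mono {G : SimpleGraph V} {S S' : Set V} (h : S ⊆ S') {v : V}
    (hv : Forced G S v) : Forced G S' v := by
  induction hv with
  | init hv => exact Forced.init (h hv)
  | force hu hadj hall ihu ihall => exact Forced.force ihu ‹_› ihall

lemma forced_not_empty {G : SimpleGraph V} {v : V}
    (hv : Forced G (∅ : Set V) v) : False := by
  induction hv with
  | init h => exact h
  | force _ _ _ ihu _ => exact ihu

lemma forced_fort {G : SimpleGraph V} {S F : Set V}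
    (hSF : ∀ v ∈ S, v ∉ F)
    (hfort : ∀ u, u ∉ F → ∀ w ∈ F, G.Adj u w → ∃ x, x ∈ F ∧ G.Adj u x ∧ x ≠ w)
    {v : V} (hv : Forced G S v) : v ∉ F := by
  induction hv with
  | init h => exact hSF _ h
  | @force u w hu hadj hall ihu ihall =>
    intro hwF
    obtain ⟨x, hxF, hux, hxw⟩ := hfort u ihu w hwF hadj
    exact ihall x hux hxw hxF

namespace GenStar

variable {T : SimpleGraph V} {c : V} {ℓ : ℕ} (hT : GenStar T c ℓ)

def LegS (i : Fin ℓ) : Set V := {v | ∃ j, j < hT.len i ∧ v = hT.leg i j}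

lemma adj_c0 (k : Fin ℓ) : T.Adj c (hT.leg k 0) :=
  (hT.adj_iff _ _).2 (Or.inl ⟨rfl, k, rfl⟩)

lemma adj_step {i : Fin ℓ} {j : ℕ} (hj : j + 1 < hT.len i) :
    T.Adj (hT.leg i j) (hT.leg i (j + 1)) :=
  (hT.adj_iff _ _).2 (Or.inr (Or.inr ⟨i, j, hj, Or.inl ⟨rfl, rfl⟩⟩))

lemma adj_c_iff (x : V) : T.Adj c x ↔ ∃ k, x = hT.leg k 0 := by
  constructor
  · intro h
    rcases (hT.adj_iff c x).1 h with ⟨_, k, hk⟩ | ⟨_, k, hk⟩ | ⟨k, m, hm, hc⟩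
    · exact ⟨k, hk⟩
    · exact absurd hk.symm (hT.ne_center k 0 (hT.len_pos k))
    · rcases hc with ⟨h1, _⟩ | ⟨_, h1⟩
      · exact absurd h1.symm (hT.ne_center k m (by omega))
      · exact absurd h1.symm (hT.ne_center k (m + 1) hm)
  · rintro ⟨k, rfl⟩
    exact hT.adj_c0 k

lemma adj_leg {i : Fin ℓ} {j : ℕ} (hj : j < hT.len i) {x : V}
    (h : T.Adj (hT.leg i j) x) :
    (j = 0 ∧ x = c) ∨ (j + 1 < hT.len i ∧ x = hT.leg i (j + 1)) ∨
      (∃ m, j = m + 1 ∧ x = hT.leg i m) := by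
  rcases (hT.adj_iff _ x).1 h with ⟨h1, _⟩ | ⟨h1, k, h2⟩ | ⟨k, m, hm, hc⟩
  · exact absurd h1 (hT.ne_center i j hj)
  · obtain ⟨hik, hj0⟩ := hT.inj i j k 0 hj (hT.len_pos k) h2
    exact Or.inl ⟨hj0, h1⟩
  · rcases hc with ⟨e1, e2⟩ | ⟨e1, e2⟩
    · obtain ⟨rfl, rfl⟩ := hT.inj i j k m hj (by omega) e1
      exact Or.inr (Or.inl ⟨hm, e2⟩)
    · obtain ⟨rfl, hjm⟩ := hT.inj i j k (m + 1) hj hm e2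
      exact Or.inr (Or.inr ⟨m, hjm, e1⟩)

lemma spread_up {S' : Set V} (hc : Forced T S' c) {i : Fin ℓ}
    (h0 : Forced T S' (hT.leg i 0)) :
    ∀ j, j < hT.len i → Forced T S' (hT.leg i j) := by
  intro j
  induction j using Nat.strong_induction_on with
  | _ j ih =>
    intro hj
    match j with
    | 0 => exact h0
    | Nat.succ m =>
      have hm : m < hT.len i := by omega
      refine Forced.force (ih m (by omega) hm) (hT.adj_step hj) ?_
      intro x hx hxw
      rcases hT.adj_leg hm hx with ⟨_, rfl⟩ | ⟨_, rfl⟩ | ⟨m', hm', rfl⟩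
      · exact hc
      · exact absurd rfl hxw
      · exact ih m' (by omega) (by omega)

lemma key {S' : Set V} (i : Fin ℓ) (hc : Forced T S' c)
    (h0 : ∀ k, k ≠ i → Forced T S' (hT.leg k 0)) : IsZFS T S' := by
  have hi0 : Forced T S' (hT.leg i 0) := by
    refine Forced.force hc (hT.adj_c0 i) ?_
    intro x hx hxw
    obtain ⟨k, rfl⟩ := (hT.adj_c_iff x).1 hx
    refine h0 k ?_
    rintro rfl
    exact hxw rfl
  have hall : ∀ k, Forced T S' (hT.leg k 0) := by
    intro k
    by_cases hk : k = i
    · subst hk; exact hi0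
    · exact h0 k hk
  intro v
  rcases hT.cover v with rfl | ⟨k, j, hj, rfl⟩
  · exact hc
  · exact hT.spread_up hc (hall k) j hj

lemma stay {S : Set V} (j : Fin ℓ) {v : V}
    (hv : Forced T (S ∩ hT.LegS j) v) :
    Forced T (S ∩ hT.LegS j) (hT.leg j 0) ∨
      ∃ j', j' < hT.len j ∧ v = hT.leg j j' := by
  induction hv with
  | init h =>
    obtain ⟨j', hj', hv⟩ := h.2
    exact Or.inr ⟨j', hj', hv⟩
  | @force u w hu hadj hall ihu ihall =>
    rcases ihu with h | ⟨j', hj', rfl⟩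
    · exact Or.inl h
    · rcases hT.adj_leg hj' hadj with ⟨hj0, rfl⟩ | ⟨hb, rfl⟩ | ⟨m, hm, rfl⟩
      · subst hj0; exact Or.inl hu
      · exact Or.inr ⟨j' + 1, hb, rfl⟩
      · exact Or.inr ⟨m, by omega, rfl⟩

lemma strong_good {S : Set V} {j : Fin ℓ} (h : Forced T (S ∩ hT.LegS j) c) :
    Forced T (S ∩ hT.LegS j) (hT.leg j 0) := by
  rcases hT.stay j h with h0 | ⟨j', hj', hc⟩
  · exact h0
  · exact absurd hc.symm (hT.ne_center j j' hj')

end GenStar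

end Aux

section Aux2

variable {V : Type*}

namespace GenStar

variable {T : SimpleGraph V} {c : V} {ℓ : ℕ} (hT : GenStar T c ℓ)

lemma exists_csource {S : Set V} (hzfs : IsZFS T S) :
    c ∈ S ∨ ∃ j, Forced T (S ∩ hT.LegS j) c := by
  by_contra hn
  push_neg at hn
  obtain ⟨hcS, hstrong⟩ := hn
  have main : ∀ v, Forced T S v → v ≠ c ∧ ∃ k j, j < hT.len k ∧ v = hT.leg k j ∧
      Forced T (S ∩ hT.LegS k) v := by
    intro v hv
    induction hv with
    | @init v h =>
      have hvc : v ≠ c := fun h' => hcS (h' ▸ h)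
      rcases hT.cover v with rfl | ⟨k, j, hj, rfl⟩
      · exact absurd rfl hvc
      · exact ⟨hvc, k, j, hj, rfl, Forced.init ⟨h, j, hj, rfl⟩⟩
    | @force u w hu hadj hall ihu ihall =>
      obtain ⟨huc, k, j, hj, rfl, hclos⟩ := ihu
      rcases hT.adj_leg hj hadj with ⟨hj0, rfl⟩ | ⟨hb, rfl⟩ | ⟨m, hm, rfl⟩
      · -- w = c, j = 0 : leg k would force c internally
        subst hj0
        exfalso
        refine hstrong k (Forced.force hclos ((hT.adj_c0 k).symm) ?_)
        intro x hx hxw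
        rcases hT.adj_leg hj hx with ⟨_, rfl⟩ | ⟨hb, rfl⟩ | ⟨m, hm, _⟩
        · exact absurd rfl hxw
        · obtain ⟨_, k', j', hj', hx', hclos'⟩ := ihall _ hx hxw
          obtain ⟨rfl, rfl⟩ := hT.inj k (0 + 1) k' j' hb hj' hx'
          exact hclos'
        · omega
      · -- w = leg k (j+1)
        refine ⟨hT.ne_center k (j + 1) hb, k, j + 1, hb, rfl, ?_⟩
        refine Forced.force hclos (hT.adj_step hb) ?_
        intro x hx hxw
        rcases hT.adj_leg hj hx with ⟨hj0, rfl⟩ | ⟨hb', rfl⟩ | ⟨m, hm, rfl⟩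
        · exact absurd rfl ((ihall _ hx hxw).1)
        · exact absurd rfl hxw
        · obtain ⟨_, k', j', hj', hx', hclos'⟩ := ihall _ hx hxw
          obtain ⟨rfl, rfl⟩ := hT.inj k m k' j' (by omega) hj' hx'
          exact hclos'
      · -- w = leg k m, j = m + 1
        refine ⟨hT.ne_center k m (by omega), k, m, by omega, rfl, ?_⟩
        have hadj' : T.Adj (hT.leg k j) (hT.leg k m) := by
          subst hm; exact (hT.adj_step hj).symm
        refine Forced.force hclos hadj' ?_
        intro x hx hxw
        rcases hT.adj_leg hj hx with ⟨hj0, rfl⟩ | ⟨hb', rfl⟩ | ⟨m', hm', rfl⟩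
        · omega
        · obtain ⟨_, k', j', hj', hx', hclos'⟩ := ihall _ hx hxw
          obtain ⟨rfl, rfl⟩ := hT.inj k (j + 1) k' j' hb' hj' hx'
          exact hclos'
        · have : m' = m := by omega
          subst this
          exact absurd rfl hxw
  exact (main c (hzfs c)).1 rfl

def Fk (S : Set V) (k : Fin ℓ) : Set V :=
  {v | ∃ j, j < hT.len k ∧ v = hT.leg k j ∧ ¬ Forced T (S ∩ hT.LegS k) v}

lemma oneSide {S : Set V} {a b : Fin ℓ} (hab : a ≠ b)
    (ha : ¬ Forced T (S ∩ hT.LegS a) (hT.leg a 0))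
    (hb : ¬ Forced T (S ∩ hT.LegS b) (hT.leg b 0))
    {u : V} (hu : u ∉ hT.Fk S a ∪ hT.Fk S b)
    {w : V} (hw : w ∈ hT.Fk S a) (hadj : T.Adj u w) :
    ∃ x, x ∈ hT.Fk S a ∪ hT.Fk S b ∧ T.Adj u x ∧ x ≠ w := by
  obtain ⟨j, hj, rfl, hwn⟩ := hw
  rcases hT.adj_leg hj hadj.symm with ⟨hj0, rfl⟩ | ⟨hb2, rfl⟩ | ⟨m, hm, rfl⟩
  · -- u = c, j = 0
    subst hj0
    refine ⟨hT.leg b 0, Or.inr ⟨0, hT.len_pos b, rfl, hb⟩, hT.adj_c0 b, ?_⟩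
    intro h
    exact hab ((hT.inj b 0 a 0 (hT.len_pos b) (hT.len_pos a) h).1).symm
  · -- u = leg a (j+1)
    have hclosu : Forced T (S ∩ hT.LegS a) (hT.leg a (j + 1)) := by
      by_contra h
      exact hu (Or.inl ⟨j + 1, hb2, rfl, h⟩)
    by_cases h2 : j + 1 + 1 < hT.len a
    · by_cases h3 : Forced T (S ∩ hT.LegS a) (hT.leg a (j + 1 + 1))
      · exfalso
        apply hwn
        refine Forced.force hclosu ((hT.adj_step hb2).symm) ?_
        intro x hx hxw
        rcases hT.adj_leg hb2 hx with ⟨h0, _⟩ | ⟨_, rfl⟩ | ⟨m, hm, rfl⟩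
        · omega
        · exact h3
        · have : m = j := by omega
          subst this
          exact absurd rfl hxw
      · refine ⟨hT.leg a (j + 1 + 1), Or.inl ⟨j + 1 + 1, h2, rfl, h3⟩,
          hT.adj_step h2, ?_⟩
        intro h
        have := (hT.inj a (j + 1 + 1) a j (by omega) hj h).2
        omega
    · -- u is the leaf
      exfalso
      apply hwn
      refine Forced.force hclosu ((hT.adj_step hb2).symm) ?_
      intro x hx hxw
      rcases hT.adj_leg hb2 hx with ⟨h0, _⟩ | ⟨hcon, _⟩ | ⟨m, hm, rfl⟩
      · omega
      · omega
      · have : m = j := by omega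
        subst this
        exact absurd rfl hxw
  · -- u = leg a m, j = m + 1
    subst hm
    have hm' : m < hT.len a := by omega
    have hclosu : Forced T (S ∩ hT.LegS a) (hT.leg a m) := by
      by_contra h
      exact hu (Or.inl ⟨m, hm', rfl, h⟩)
    match m, hm', hclosu with
    | 0, hm', hclosu => exact absurd hclosu ha
    | Nat.succ m', hm', hclosu =>
      by_cases h3 : Forced T (S ∩ hT.LegS a) (hT.leg a m')
      · exfalso
        apply hwn
        refine Forced.force hclosu (hT.adj_step hj) ?_
        intro x hx hxw
        rcases hT.adj_leg hm' hx with ⟨h0, _⟩ | ⟨_, rfl⟩ | ⟨m'', hm'', rfl⟩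
        · omega
        · exact absurd rfl hxw
        · have : m'' = m' := by omega
          subst this
          exact h3
      · refine ⟨hT.leg a m', Or.inl ⟨m', by omega, rfl, h3⟩,
          (hT.adj_step (show m' + 1 + 1 - 1 < hT.len a by omega)).symm, ?_⟩
        · intro h
          have := (hT.inj a m' a (m' + 1 + 1) (by omega) hj h).2
          omega

lemma twobad {S : Set V} (hzfs : IsZFS T S) {k k' : Fin ℓ} (hkk : k ≠ k')
    (hk : ¬ Forced T (S ∩ hT.LegS k) (hT.leg k 0))
    (hk' : ¬ Forced T (S ∩ hT.LegS k') (hT.leg k' 0)) : False := by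
  have hSF : ∀ v ∈ S, v ∉ hT.Fk S k ∪ hT.Fk S k' := by
    intro v hv hvF
    rcases hvF with ⟨j, hj, rfl, hn⟩ | ⟨j, hj, rfl, hn⟩
    · exact hn (Forced.init ⟨hv, j, hj, rfl⟩)
    · exact hn (Forced.init ⟨hv, j, hj, rfl⟩)
  have hf : ∀ u, u ∉ hT.Fk S k ∪ hT.Fk S k' → ∀ w ∈ hT.Fk S k ∪ hT.Fk S k',
      T.Adj u w → ∃ x, x ∈ hT.Fk S k ∪ hT.Fk S k' ∧ T.Adj u x ∧ x ≠ w := by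
    intro u hu w hw hadj
    rcases hw with hw | hw
    · exact hT.oneSide hkk hk hk' hu hw hadj
    · have hu' : u ∉ hT.Fk S k' ∪ hT.Fk S k := by
        rw [Set.union_comm]; exact hu
      obtain ⟨x, hxF, hux, hxw⟩ := hT.oneSide hkk.symm hk' hk hu' hw hadj
      rw [Set.union_comm] at hxF
      exact ⟨x, hxF, hux, hxw⟩
  exact forced_fort hSF hf (hzfs (hT.leg k 0)) (Or.inl ⟨0, hT.len_pos k, rfl, hk⟩)

end GenStar

end Aux2

/-- Let `T` be a generalized star (a tree with exactly one vertex `c` of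
degree at least 3) with `ℓ` legs, and let `S` be a minimal zero forcing set of `T`.
Then exactly `ℓ - 1` of the legs of `T` contain a vertex of `S`. -/
theorem genstar_minimal_legs {V : Type*} [Fintype V] (T : SimpleGraph V) (c : V)
    (ℓ : ℕ) (hT : GenStar T c ℓ) (hℓ : 3 ≤ ℓ)
    (S : Set V) (hS : IsMinimalZFS T S) :
    {i : Fin ℓ | ∃ j, j < hT.len i ∧ hT.leg i j ∈ S}.ncard = ℓ - 1 := by
  classical
  set H := {i : Fin ℓ | ∃ j, j < hT.len i ∧ hT.leg i j ∈ S} with hH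
  have hunhit : ∀ i ∉ H, ¬ Forced T (S ∩ hT.LegS i) (hT.leg i 0) := by
    intro i hi hforced
    have hempty : S ∩ hT.LegS i = ∅ := by
      ext x
      simp only [Set.mem_inter_iff, Set.mem_empty_iff_false, iff_false, not_and]
      rintro hxS ⟨j, hj, rfl⟩
      exact hi ⟨j, hj, hxS⟩
    rw [hempty] at hforced
    exact forced_not_empty hforced
  have hsub : Hᶜ.Subsingleton := by
    intro i hi i' hi'
    by_contra hne
    exact hT.twobad hS.1 hne (hunhit i hi) (hunhit i' hi')
  have hne : Hᶜ.Nonempty := by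
    by_contra hcon
    rw [Set.not_nonempty_iff_eq_empty] at hcon
    have hhit : ∀ i : Fin ℓ, ∃ j, j < hT.len i ∧ hT.leg i j ∈ S := by
      intro i
      by_contra h
      have : i ∈ Hᶜ := h
      rw [hcon] at this
      exact this
    obtain ⟨i, hGood, hcsrc⟩ :
        ∃ i : Fin ℓ, (∀ m, m ≠ i → Forced T (S ∩ hT.LegS m) (hT.leg m 0)) ∧
          (c ∈ S ∨ ∃ j, j ≠ i ∧ Forced T (S ∩ hT.LegS j) c) := by
      rcases hT.exists_csource hS.1 with hc | ⟨j, hj⟩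
      · by_cases hB : ∃ k, ¬ Forced T (S ∩ hT.LegS k) (hT.leg k 0)
        · obtain ⟨k, hk⟩ := hB
          refine ⟨k, fun m hm => ?_, Or.inl hc⟩
          by_contra h
          exact hT.twobad hS.1 hm h hk
        · push_neg at hB
          exact ⟨⟨0, by omega⟩, fun m _ => hB m, Or.inl hc⟩
      · have hgj : Forced T (S ∩ hT.LegS j) (hT.leg j 0) := hT.strong_good hj
        by_cases hB : ∃ k, ¬ Forced T (S ∩ hT.LegS k) (hT.leg k 0)
        · obtain ⟨k, hk⟩ := hB
          refine ⟨k, fun m hm => ?_, Or.inr ⟨j, fun hjk => hk (hjk ▸ hgj), hj⟩⟩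
          by_contra h
          exact hT.twobad hS.1 hm h hk
        · push_neg at hB
          have : Nontrivial (Fin ℓ) := Fin.nontrivial_iff_two_le.2 (by omega)
          obtain ⟨i, hij⟩ := exists_ne j
          exact ⟨i, fun m _ => hB m, Or.inr ⟨j, Ne.symm hij, hj⟩⟩
    set S' := S \ hT.LegS i with hS'
    have hsubs : ∀ m, m ≠ i → S ∩ hT.LegS m ⊆ S' := by
      rintro m hm x ⟨hxS, j', hj', rfl⟩
      refine ⟨hxS, ?_⟩
      rintro ⟨j'', hj'', he⟩
      exact hm (hT.inj m j' i j'' hj' hj'' he).1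
    have hcS' : Forced T S' c := by
      rcases hcsrc with hc | ⟨j, hji, hj⟩
      · refine Forced.init ⟨hc, ?_⟩
        rintro ⟨j'', hj'', he⟩
        exact hT.ne_center i j'' hj'' he.symm
      · exact forced_mono (hsubs j hji) hj
    have h0 : ∀ k, k ≠ i → Forced T S' (hT.leg k 0) :=
      fun k hk => forced_mono (hsubs k hk) (hGood k hk)
    have hzfs' : IsZFS T S' := hT.key i hcS' h0
    obtain ⟨j0, hj0, hj0S⟩ := hhit i
    have hnotin : hT.leg i j0 ∉ S' := fun h => h.2 ⟨j0, hj0, rfl⟩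
    have hss : S' ⊂ S := by
      refine Set.ssubset_iff_subset_ne.2 ⟨Set.diff_subset, ?_⟩
      intro heq
      rw [heq] at hnotin
      exact hnotin hj0S
    exact hS.2 S' hss hzfs'
  obtain ⟨a, ha⟩ := hne
  have hsingle : Hᶜ = {a} := hsub.eq_singleton_of_mem ha
  have hcard : Hᶜ.ncard = 1 := by rw [hsingle]; exact Set.ncard_singleton a
  have htot : H.ncard + Hᶜ.ncard = ℓ := by
    rw [Set.ncard_add_ncard_compl]
    simp
  omega
end

section
/- Let T be a tree with a vertex v having leaf neighbors l_1,...,l_k (k ≥ 2), and let T' = T − {v, l_1, ..., l_k}. A vertex u of T' is contained in some minimal zero forcing set of T' if and only if u is contained in some minimal zero forcing set of T. -/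
open ZF SimpleGraph

theorem SimpleGraph.IsAcyclic.not_reachable_induce {V : Type*} {G : SimpleGraph V}
    (hG : G.IsAcyclic) {W : Set V} {v : V} (hv : v ∉ W) {c d : W} (hcd : c ≠ d) (hc : G.Adj v c)
    (hd : G.Adj v d) : ¬ (G.induce W).Reachable c d := by
  classical
  rintro ⟨w⟩
  have hvw : v ∉ (w.map (Embedding.induce W).toHom).support := by
    rw [Walk.support_map, List.mem_map]
    rintro ⟨z, -, hz⟩
    exact hv (hz ▸ z.2)
  have hq : (Walk.cons hc.symm (.cons hd .nil) : G.Walk c d).IsPath := by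
    simp [Walk.isPath_def, hc.ne', hd.ne, Subtype.val_injective.ne hcd]
  have hp : (w.map (Embedding.induce W).toHom).toPath = ⟨_, hq⟩ :=
    (hG.subsingleton_path c d).elim _ _
  apply hvw (Walk.support_toPath_subset_support _ _)
  rw [hp]
  simp

namespace ZF

variable {V : Type*} {G : SimpleGraph V}

theorem Forced.mono {S S' : Set V} (h : S ⊆ S') {x : V} (hx : Forced G S x) :
    Forced G S' x := by
  induction hx with
  | init hx => exact .init (h hx)
  | force _ hadj _ ih ihside => exact .force ih hadj ihside

theorem IsZFS.mono {S S' : Set V} (h : S ⊆ S') (hS : IsZFS G S) : IsZFS G S' :=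
  fun x => (hS x).mono h

theorem neighborSet_eq_singleton_of_deg_eq_one {v l : V} (hvl : G.Adj v l) (hl : deg G l = 1) :
    G.neighborSet l = {v} := by
  obtain ⟨a, ha⟩ := Set.ncard_eq_one.1 hl
  have hv : v ∈ G.neighborSet l := hvl.symm
  rw [ha] at hv ⊢
  rw [Set.mem_singleton_iff.1 hv]

theorem isMinimalZFS_iff_minimal {S : Set V} : IsMinimalZFS G S ↔ Minimal (IsZFS G) S :=
  Set.minimal_iff_forall_ssubset.symm

theorem exists_isMinimalZFS_mem [Finite V] {B : Set V} {u : V} (hB : IsZFS G B)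
    (hBu : ¬ IsZFS G (B \ {u})) : ∃ S, IsMinimalZFS G S ∧ u ∈ S := by
  obtain ⟨S, hSB, hS⟩ := exists_minimal_le_of_wellFoundedLT (IsZFS G) B hB
  refine ⟨S, isMinimalZFS_iff_minimal.2 hS, ?_⟩
  by_contra huS
  exact hBu (hS.prop.mono fun x hx => ⟨hSB hx, fun hxu => huS (hxu ▸ hx)⟩)

theorem Forced.of_not_reachable {S : Set V} {c x : V} (hx : Forced G (insert c S) x)
    (hcx : ¬ G.Reachable c x) : Forced G S x := by
  induction hx with
  | init hx =>
    rcases hx with rfl | hx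
    · exact absurd .rfl hcx
    · exact .init hx
  | force _ hadj _ ih ihside =>
    refine .force (ih fun h => hcx (h.trans hadj.reachable)) hadj fun z hz hzw => ?_
    exact ihside z hz hzw fun h => hcx (h.trans (hz.symm.reachable.trans hadj.reachable))

theorem Forced.of_induce {W : Set V} {X : Set W} {B : Set V}
    (hX : ∀ z ∈ X, Forced G B z) (hbdry : ∀ a ∈ W, ∀ y ∉ W, G.Adj a y → Forced G B y)
    {z : W} (hz : Forced (G.induce W) X z) : Forced G B z := by
  induction hz with
  | init hz => exact hX _ hz
  | @force a z _ hadj _ ih ihside =>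
    refine .force ih hadj fun x hx hxz => ?_
    by_cases hxW : x ∈ W
    · exact ihside ⟨x, hxW⟩ hx fun h => hxz (congrArg Subtype.val h)
    · exact hbdry a a.2 x hxW hx

theorem Forced.induce {W : Set V} {A : Set W} {B : Set V}
    (hB : ∀ z : W, (z : V) ∈ B → Forced (G.induce W) A z)
    (hout : ∀ y ∉ W, ∀ x : W, G.Adj y x →
      (∀ z : W, G.Adj y z → z ≠ x → Forced (G.induce W) A z) → Forced (G.induce W) A x)
    {x : V} (hx : Forced G B x) (hxW : x ∈ W) : Forced (G.induce W) A ⟨x, hxW⟩ := by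
  induction hx with
  | init hx => exact hB _ hx
  | @force y x _ hadj _ ih ihside =>
    by_cases hyW : y ∈ W
    · have hy : Forced (G.induce W) A ⟨y, hyW⟩ := ih hyW
      exact .force hy hadj fun z hz hzx => ihside z hz (fun h => hzx (Subtype.ext h)) z.2
    · exact hout y hyW ⟨x, hxW⟩ hadj fun z hz hzx =>
        ihside z hz (fun h => hzx (Subtype.ext h)) z.2

/-- `L` is a set of leaves hanging at `v`, and `W` is what remains after deleting `v` and `L`. -/
structure IsPendantStar (G : SimpleGraph V) (v : V) (L W : Set V) : Prop where
  neighborSet_eq : ∀ l ∈ L, G.neighborSet l = {v}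
  compl_eq : W = ({v} ∪ L)ᶜ

namespace IsPendantStar

variable {v x l l' : V} {L W B S : Set V}

theorem eq_of_adj (h : IsPendantStar G v L W) (hl : l ∈ L) (hxl : G.Adj x l) : x = v := by
  have hx : x ∈ G.neighborSet l := hxl.symm
  rwa [h.neighborSet_eq l hl] at hx

theorem adj (h : IsPendantStar G v L W) (hl : l ∈ L) : G.Adj v l := by
  have hv : v ∈ G.neighborSet l := by rw [h.neighborSet_eq l hl]; rfl
  exact hv.symm

theorem center_notMem (h : IsPendantStar G v L W) : v ∉ W := by
  simp [h.compl_eq]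

theorem notMem_of_mem (h : IsPendantStar G v L W) (hl : l ∈ L) : l ∉ W := by
  simp [h.compl_eq, hl]

theorem eq_or_mem_of_notMem (h : IsPendantStar G v L W) (hx : x ∉ W) : x = v ∨ x ∈ L := by
  simpa [h.compl_eq, or_iff_not_imp_left] using hx

theorem eq_of_adj_of_mem (h : IsPendantStar G v L W) {a : V} (ha : a ∈ W) (hx : x ∉ W)
    (hax : G.Adj a x) : x = v :=
  (h.eq_or_mem_of_notMem hx).resolve_right fun hxL =>
    h.center_notMem (h.eq_of_adj hxL hax ▸ ha)

theorem forced_center (h : IsPendantStar G v L W) (hl : l ∈ L) (hlB : l ∈ B) : Forced G B v :=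
  .force (.init hlB) (h.adj hl).symm fun _ hx hxv => absurd (h.eq_of_adj hl hx.symm) hxv

theorem mem_of_isZFS (h : IsPendantStar G v L W) (hS : IsZFS G S) (hl : l ∈ L) (hl' : l' ∈ L)
    (hne : l ≠ l') (hlS : l ∉ S) : l' ∈ S := by
  by_contra hl'S
  suffices ∀ x, Forced G S x → x ≠ l ∧ x ≠ l' from (this l (hS l)).1 rfl
  intro x hx
  induction hx with
  | init hx => exact ⟨fun e => hlS (e ▸ hx), fun e => hl'S (e ▸ hx)⟩
  | force _ hadj _ _ ihside =>
    constructor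
    · rintro rfl
      obtain rfl := h.eq_of_adj hl hadj
      exact (ihside l' (h.adj hl') hne.symm).2 rfl
    · rintro rfl
      obtain rfl := h.eq_of_adj hl' hadj
      exact (ihside l (h.adj hl) hne).1 rfl

theorem forced_of_induce (h : IsPendantStar G v L W) {X : Set W} (hv : Forced G B v)
    (hX : ∀ z ∈ X, Forced G B z) {z : W} (hz : Forced (G.induce W) X z) : Forced G B z :=
  hz.of_induce hX fun _ ha _ hy hay => h.eq_of_adj_of_mem ha hy hay ▸ hv

theorem forced_of_adj_center (h : IsPendantStar G v L W) (hv : Forced G B v) (hx : G.Adj v x)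
    (hW : ∀ y : W, G.Adj v y → (y : V) ≠ x → Forced G B y) (hL : ∀ l ∈ L, l ≠ x → l ∈ B) :
    Forced G B x :=
  .force hv hx fun y hy hyx => by
    by_cases hyW : y ∈ W
    · exact hW ⟨y, hyW⟩ hy hyx
    · rcases h.eq_or_mem_of_notMem hyW with rfl | hyL
      · exact absurd hy (G.irrefl)
      · exact .init (hL y hyL hyx)

theorem isZFS_of_forced (h : IsPendantStar G v L W) (hv : Forced G B v)
    (hW : ∀ z : W, Forced G B z) (hl : l ∈ L) (hL : ∀ l' ∈ L, l' ≠ l → l' ∈ B) : IsZFS G B := by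
  intro x
  by_cases hxW : x ∈ W
  · exact hW ⟨x, hxW⟩
  rcases h.eq_or_mem_of_notMem hxW with rfl | hxL
  · exact hv
  by_cases hxl : x = l
  · subst hxl
    exact h.forced_of_adj_center hv (h.adj hxL) (fun y _ _ => hW y) hL
  · exact .init (hL x hxL hxl)

theorem isZFS_of_isZFS_induce (h : IsPendantStar G v L W) (hL2 : 2 ≤ L.ncard) (hl : l ∈ L)
    (hL : ∀ l' ∈ L, l' ≠ l → l' ∈ B) {X : Set W} (hX : IsZFS (G.induce W) X)
    (hXB : ∀ z ∈ X, (z : V) ∈ B) : IsZFS G B := by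
  obtain ⟨l', hl', hne⟩ := Set.exists_ne_of_one_lt_ncard hL2 l
  have hv := h.forced_center hl' (hL l' hl' hne)
  exact h.isZFS_of_forced hv (fun z => h.forced_of_induce hv (fun z hz => .init (hXB z hz)) (hX z))
    hl hL

theorem isZFS_of_isZFS_induce_insert (h : IsPendantStar G v L W) (hl : l ∈ L) (hLB : L ⊆ B)
    {c : W} (hc : G.Adj v c) {X : Set W} (hXB : ∀ z ∈ X, (z : V) ∈ B)
    (hN : ∀ y : W, G.Adj v y → y ≠ c → Forced (G.induce W) X y)
    (hX : IsZFS (G.induce W) (insert c X)) : IsZFS G B := by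
  have hv := h.forced_center hl (hLB hl)
  have hXf : ∀ z ∈ X, Forced G B z := fun z hz => .init (hXB z hz)
  have hcf : Forced G B c := h.forced_of_adj_center hv hc
    (fun y hy hyc => h.forced_of_induce hv hXf (hN y hy fun e => hyc (congrArg _ e)))
    fun l' hl' _ => hLB hl'
  refine h.isZFS_of_forced hv (fun z => h.forced_of_induce hv ?_ (hX z)) hl fun l' hl' _ => hLB hl'
  rintro z (rfl | hz)
  exacts [hcf, hXf z hz]

theorem isZFS_induce_of_notMem (h : IsPendantStar G v L W) (hl : l ∈ L) (hlB : l ∉ B)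
    (hB : IsZFS G B) : IsZFS (G.induce W) (Subtype.val ⁻¹' B) := by
  -- `l` can only be forced by `v`, after all other neighbours of `v`, so `v` never forces into `W`.
  have key : ∀ x, Forced G B x →
      (∀ hx : x ∈ W, Forced (G.induce W) (Subtype.val ⁻¹' B) ⟨x, hx⟩) ∧
      (x = l → ∀ y : W, G.Adj v y → Forced (G.induce W) (Subtype.val ⁻¹' B) y) := by
    intro x hx
    induction hx with
    | init hx => exact ⟨fun _ => .init hx, fun hxl => absurd (hxl ▸ hx) hlB⟩
    | @force y x _ hadj _ ih ihside =>
      refine ⟨fun hxW => ?_, ?_⟩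
      · by_cases hyW : y ∈ W
        · have hy := ih.1 hyW
          exact .force hy hadj fun z hz hzx => (ihside z hz fun e => hzx (Subtype.ext e)).1 z.2
        · obtain rfl := h.eq_of_adj_of_mem hxW hyW hadj.symm
          exact (ihside l (h.adj hl) fun e => h.notMem_of_mem hl (e ▸ hxW)).2 rfl ⟨x, hxW⟩ hadj
      · rintro rfl z hz
        obtain rfl := h.eq_of_adj hl hadj
        exact (ihside z hz fun e => h.notMem_of_mem hl (e ▸ z.2)).1 z.2
  exact fun z => (key z (hB z)).1 z.2

theorem isZFS_induce (h : IsPendantStar G v L W) {A : Set W} (hB : IsZFS G B)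
    (hBA : ∀ z : W, (z : V) ∈ B → Forced (G.induce W) A z)
    (hv : ∀ x : W, G.Adj v x →
      (∀ y : W, G.Adj v y → y ≠ x → Forced (G.induce W) A y) → Forced (G.induce W) A x) :
    IsZFS (G.induce W) A := fun z =>
  (hB z).induce hBA (fun y hy x hyx hothers => by
    obtain rfl := h.eq_of_adj_of_mem x.2 hy hyx.symm
    exact hv x hyx hothers) z.2

theorem forced_induce_of_ne (h : IsPendantStar G v L W) (hS : IsZFS G S) {c y : W}
    (hc : G.Adj v c) (hcS : ¬ Forced (G.induce W) (Subtype.val ⁻¹' S) c) (hy : G.Adj v y)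
    (hyc : y ≠ c) : Forced (G.induce W) (Subtype.val ⁻¹' S) y := by
  by_contra hyS
  refine hcS (h.isZFS_induce hS (fun _ hz => .init hz) (fun x _ hothers => ?_) c)
  by_cases hxc : x = c
  · exact absurd (hothers y hy (hxc ▸ hyc)) hyS
  · exact absurd (hothers c hc (Ne.symm hxc)) hcS

theorem exists_adj_not_forced_induce (h : IsPendantStar G v L W) (hS : IsZFS G S)
    (hA : ¬ IsZFS (G.induce W) (Subtype.val ⁻¹' S)) :
    ∃ c : W, G.Adj v c ∧ ¬ Forced (G.induce W) (Subtype.val ⁻¹' S) c := by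
  by_contra! hall
  exact hA (h.isZFS_induce hS (fun _ hz => .init hz) fun x hx _ => hall x hx)

variable [Finite V]

theorem exists_isMinimalZFS_mem_of_induce (h : IsPendantStar G v L W) (hL2 : 2 ≤ L.ncard)
    {S' : Set W} (hS' : IsMinimalZFS (G.induce W) S') {u : W} (hu : u ∈ S') :
    ∃ S, IsMinimalZFS G S ∧ (u : V) ∈ S := by
  obtain ⟨l, hl⟩ := Set.nonempty_of_ncard_ne_zero (s := L) (by omega)
  have hB : IsZFS G (Subtype.val '' S' ∪ (L \ {l})) :=
    h.isZFS_of_isZFS_induce hL2 hl (fun l' hl' hne => Or.inr ⟨hl', hne⟩) hS'.1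
      fun z hz => Or.inl ⟨z, hz, rfl⟩
  refine exists_isMinimalZFS_mem hB fun hBu => hS'.2 _ (Set.sdiff_singleton_ssubset.2 hu) ?_
  refine (h.isZFS_induce_of_notMem hl ?_ hBu).mono ?_
  · rintro ⟨⟨z, -, hzl⟩ | ⟨-, hne⟩, -⟩
    exacts [h.notMem_of_mem hl (hzl ▸ z.2), hne rfl]
  · rintro z ⟨⟨z', hz', hzz⟩ | ⟨hzL, -⟩, hzu⟩
    · obtain rfl := Subtype.ext hzz
      exact ⟨hz', fun e => hzu (congrArg Subtype.val e)⟩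
    · exact absurd z.2 (h.notMem_of_mem hzL)

theorem exists_isMinimalZFS_induce_mem_of_notMem (h : IsPendantStar G v L W)
    (hL2 : 2 ≤ L.ncard) (hS : IsMinimalZFS G S) (hl : l ∈ L) (hlS : l ∉ S) {u : W}
    (hu : (u : V) ∈ S) : ∃ S', IsMinimalZFS (G.induce W) S' ∧ u ∈ S' := by
  refine exists_isMinimalZFS_mem (h.isZFS_induce_of_notMem hl hlS hS.1) fun hSu =>
    hS.2 _ (Set.sdiff_singleton_ssubset.2 hu) ?_
  refine h.isZFS_of_isZFS_induce hL2 hl (fun l' hl' hne => ⟨h.mem_of_isZFS hS.1 hl hl'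
    hne.symm hlS, fun e => h.notMem_of_mem hl' (e ▸ u.2)⟩) hSu ?_
  rintro z ⟨hz, hzu⟩
  exact ⟨hz, fun e => hzu (Subtype.ext e)⟩

theorem exists_isMinimalZFS_induce_mem_of_subset (hG : G.IsAcyclic) (h : IsPendantStar G v L W)
    (hL2 : 2 ≤ L.ncard) (hS : IsMinimalZFS G S) (hLS : L ⊆ S) {u : W} (hu : (u : V) ∈ S) :
    ∃ S', IsMinimalZFS (G.induce W) S' ∧ u ∈ S' := by
  obtain ⟨l, hl⟩ := Set.nonempty_of_ncard_ne_zero (s := L) (by omega)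
  have hA : ¬ IsZFS (G.induce W) (Subtype.val ⁻¹' S) := fun hA =>
    hS.2 _ (Set.sdiff_singleton_ssubset.2 (hLS hl)) <|
      h.isZFS_of_isZFS_induce hL2 hl (fun l' hl' hne => ⟨hLS hl', hne⟩) hA
        fun z hz => ⟨hz, fun e => h.notMem_of_mem hl (e ▸ z.2)⟩
  obtain ⟨c, hc, hcS⟩ := h.exists_adj_not_forced_induce hS.1 hA
  have hAc : IsZFS (G.induce W) (insert c (Subtype.val ⁻¹' S)) :=
    h.isZFS_induce hS.1 (fun _ hz => .init (Or.inr hz)) fun x hx _ => by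
      by_cases hxc : x = c
      · exact .init (Or.inl hxc)
      · exact (h.forced_induce_of_ne hS.1 hc hcS hx hxc).mono (Set.subset_insert _ _)
  have huc : u ≠ c := fun e => hcS (.init (e ▸ hu))
  refine exists_isMinimalZFS_mem hAc fun hAcu => hS.2 _ (Set.sdiff_singleton_ssubset.2 hu) ?_
  rw [← Set.insert_sdiff_singleton_comm huc.symm] at hAcu
  refine h.isZFS_of_isZFS_induce_insert hl (fun l' hl' => ⟨hLS hl', fun e =>
    h.notMem_of_mem hl' (e ▸ u.2)⟩) hc (fun z hz => ⟨hz.1, fun e => hz.2 (Subtype.ext e)⟩)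
    (fun y hy hyc => (hAcu y).of_not_reachable ?_) hAcu
  exact hG.not_reachable_induce h.center_notMem (Ne.symm hyc) hc hy

end IsPendantStar

end ZF

/-- Let `T` be a tree with a vertex `v` having at least two leaf
neighbors `L`, and let `T'` be the tree obtained by deleting `v` and its leaf
neighbors.  A vertex `u` of `T'` is contained in some minimal zero forcing set of `T'`
if and only if `u` is contained in some minimal zero forcing set of `T`. -/
theorem star_removal_minimal_membership {V : Type*} [Fintype V] (T : SimpleGraph V)
    (hT : T.IsTree) (v : V)
    (L : Set V) (hL : L = {u | T.Adj v u ∧ deg T u = 1}) (hL2 : 2 ≤ L.ncard)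
    (u : ↥(({v} ∪ L)ᶜ : Set V)) :
    (∃ S' : Set ↥(({v} ∪ L)ᶜ : Set V),
        IsMinimalZFS (T.induce (({v} ∪ L)ᶜ : Set V)) S' ∧ u ∈ S') ↔
      (∃ S : Set V, IsMinimalZFS T S ∧ (u : V) ∈ S) := by
  have h : IsPendantStar T v L (({v} ∪ L)ᶜ) := ⟨fun l hl => by
    rw [hL] at hl
    exact neighborSet_eq_singleton_of_deg_eq_one hl.1 hl.2, rfl⟩
  refine ⟨fun ⟨S', hS', hu⟩ => h.exists_isMinimalZFS_mem_of_induce hL2 hS' hu,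
    fun ⟨S, hS, hu⟩ => ?_⟩
  by_cases hLS : L ⊆ S
  · exact h.exists_isMinimalZFS_induce_mem_of_subset hT.isAcyclic hL2 hS hLS hu
  · obtain ⟨l, hl, hlS⟩ := Set.not_subset.1 hLS
    exact h.exists_isMinimalZFS_induce_mem_of_notMem hL2 hS hl hlS hu
end
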